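/- arXiv:2604.04985 — 2 statements merged into one kernel-verified Lean document; each statement's English description precedes it below -/
import Mathlib

section
/- For every n ≥ 3, the total graph T(C_n) of the cycle C_n is nearly dispersable: mbt(T(C_n)) = Δ(T(C_n)) + 1 = 5. -/
open SimpleGraph

/-- Degree of a vertex. -/
noncomputable def deg {V : Type*} (G : SimpleGraph V) (v : V) : ℕ :=
  (G.neighborSet v).ncard

/-- Maximum degree Δ(G) of a finite simple graph. -/
noncomputable def maxDeg {V : Type*} [Fintype V] (G : SimpleGraph V) : ℕ :=
  Finset.univ.sup (deg G)

/-- `IsMBE G k f page` : the linear order on vertices given by the injection `f : V → ℕ`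
together with the page assignment `page` is a matching book embedding of `G` on `k` pages:
every edge gets a page `< k`, no two edges on a common page cross, and every vertex is
incident to at most one edge on each page. -/
def IsMBE {V : Type*} (G : SimpleGraph V) (k : ℕ) (f : V → ℕ) (page : Sym2 V → ℕ) : Prop :=
  Function.Injective f ∧
  (∀ u v, G.Adj u v → page s(u, v) < k) ∧
  (∀ u v x y, G.Adj u v → G.Adj x y → page s(u, v) = page s(x, y) →
    ¬(f u < f x ∧ f x < f v ∧ f v < f y)) ∧
  (∀ u v w, G.Adj u v → G.Adj u w → v ≠ w → page s(u, v) ≠ page s(u, w))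

/-- The matching book thickness of `G`: the least number of pages admitting a
matching book embedding. -/
noncomputable def mbt {V : Type*} (G : SimpleGraph V) : ℕ :=
  sInf {k | ∃ f page, IsMBE G k f page}

/-- A graph is outerplanar iff it has a one-page book embedding: a linear order of
its vertices (an injection into `ℕ`) in which no two edges cross. -/
def IsOuterplanar {V : Type*} (G : SimpleGraph V) : Prop :=
  ∃ f : V → ℕ, Function.Injective f ∧
    ∀ u v x y, G.Adj u v → G.Adj x y → ¬(f u < f x ∧ f x < f v ∧ f v < f y)

/-- The derived graph of `G` on vertex set `V(G) ⊕ E(G)`. Black–white edges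
(`u`–`(uv)` for `u` an endpoint of the edge `uv`) are always present; `black` indicates
whether the original edges of `G` are retained, and `white` indicates whether two edge
vertices corresponding to adjacent edges of `G` (distinct edges sharing an endpoint)
are joined. -/
def derivedG {V : Type*} (G : SimpleGraph V) (black white : Bool) :
    SimpleGraph (V ⊕ G.edgeSet) where
  Adj x y :=
    match x, y with
    | Sum.inl u, Sum.inl v => black = true ∧ G.Adj u v
    | Sum.inl u, Sum.inr e => u ∈ (e : Sym2 V)
    | Sum.inr e, Sum.inl u => u ∈ (e : Sym2 V)
    | Sum.inr e, Sum.inr f =>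
        white = true ∧ e ≠ f ∧ ∃ w, w ∈ (e : Sym2 V) ∧ w ∈ (f : Sym2 V)
  symm := by
    constructor
    rintro (u | e) (v | f) h
    · exact ⟨h.1, h.2.symm⟩
    · exact h
    · exact h
    · obtain ⟨hw, hne, w, h1, h2⟩ := h
      exact ⟨hw, hne.symm, w, h2, h1⟩
  loopless := by
    constructor
    rintro (u | e) h
    · exact G.loopless.irrefl u h.2
    · exact h.2.1 rfl

/-- The four graph operations `S`, `R`, `Q`, `T`. -/
inductive FOp : Type
  | S | R | Q | T
  deriving DecidableEq

/-- Whether the operation retains the original (black–black) edges of `G`. -/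
def FOp.black : FOp → Bool
  | .R => true
  | .T => true
  | _ => false

/-- Whether the operation joins edge (white) vertices of adjacent edges. -/
def FOp.white : FOp → Bool
  | .Q => true
  | .T => true
  | _ => false

/-- `FGraph F G` is the graph `F(G)` for `F ∈ {S, R, Q, T}`. -/
def FGraph (F : FOp) {V : Type*} (G : SimpleGraph V) : SimpleGraph (V ⊕ G.edgeSet) :=
  derivedG G F.black F.white

/-- The `F`-sum `G +_F H`: vertex set `(V(G) ∪ E(G)) × V(H)`; `(u₁, u₂)` and `(v₁, v₂)`
are adjacent iff `u₁ = v₁ ∈ V(G)` and `u₂v₂ ∈ E(H)`, or `u₂ = v₂` and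
`u₁v₁ ∈ E(F(G))`. -/
def FSum (F : FOp) {V W : Type*} (G : SimpleGraph V) (H : SimpleGraph W) :
    SimpleGraph ((V ⊕ G.edgeSet) × W) where
  Adj x y :=
    (x.1 = y.1 ∧ (∃ u : V, x.1 = Sum.inl u) ∧ H.Adj x.2 y.2) ∨
    (x.2 = y.2 ∧ (FGraph F G).Adj x.1 y.1)
  symm := by
    constructor
    rintro ⟨a, b⟩ ⟨c, d⟩ (⟨h1, h2, h3⟩ | ⟨h1, h2⟩)
    · exact Or.inl ⟨h1.symm, h1 ▸ h2, h3.symm⟩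
    · exact Or.inr ⟨h1.symm, h2.symm⟩
  loopless := by
    constructor
    rintro ⟨a, b⟩ (⟨-, -, h⟩ | ⟨-, h⟩)
    · exact H.loopless.irrefl b h
    · exact (FGraph F G).loopless.irrefl a h

/-- The path graph `P_n` on `n` vertices. -/
def pathG (n : ℕ) : SimpleGraph (Fin n) where
  Adj i j := (i : ℕ) + 1 = (j : ℕ) ∨ (j : ℕ) + 1 = (i : ℕ)
  symm := by constructor; intro i j h; tauto
  loopless := by constructor; intro i h; omega

instance (n : ℕ) : DecidableRel (pathG n).Adj := fun i j =>
  inferInstanceAs (Decidable (_ ∨ _))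

/-- The cycle graph `C_n` on `n` vertices (intended for `n ≥ 3`). -/
def cycleG (n : ℕ) : SimpleGraph (Fin n) where
  Adj i j := i ≠ j ∧ (((i : ℕ) + 1) % n = (j : ℕ) ∨ ((j : ℕ) + 1) % n = (i : ℕ))
  symm := by constructor; intro i j h; tauto
  loopless := by constructor; intro i h; exact h.1 rfl

instance (n : ℕ) : DecidableRel (cycleG n).Adj := fun i j =>
  inferInstanceAs (Decidable (_ ∧ _))

/-- The star graph `S_n = K_{1,n}` on `n + 1` vertices: vertex `0` is the center. -/
def starG (n : ℕ) : SimpleGraph (Fin (n + 1)) where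
  Adj i j := i ≠ j ∧ (i = 0 ∨ j = 0)
  symm := by constructor; intro i j h; tauto
  loopless := by constructor; intro i h; exact h.1 rfl

instance (n : ℕ) : DecidableRel (starG n).Adj := fun i j =>
  inferInstanceAs (Decidable (_ ∧ _))

/-- The circulant graph `C(ℤ_m, {1, 2})`: vertices `0, …, m - 1`, with `i` adjacent to
`j` iff `i - j ≡ ±1` or `±2 (mod m)`. -/
def circulantG12 (m : ℕ) : SimpleGraph (Fin m) where
  Adj i j := i ≠ j ∧
    (((i : ℕ) + 1) % m = (j : ℕ) ∨ ((i : ℕ) + 2) % m = (j : ℕ) ∨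
     ((j : ℕ) + 1) % m = (i : ℕ) ∨ ((j : ℕ) + 2) % m = (i : ℕ))
  symm := by constructor; intro i j h; tauto
  loopless := by constructor; intro i h; exact h.1 rfl

/-!
Laying out `T(C_n)` along the cycle as `v₀, v₀v₁, v₁, v₁v₂, …` identifies it with the circulant
`C(ℤ_{2n}, {1, 2})`, a 4-regular graph with triangles.

Four pages do not suffice: in a `k`-page matching book embedding of a `k`-regular graph every page
is a perfect matching, and being non-crossing it matches the vertices strictly inside each of its
edges among themselves. So every edge encloses an even number of vertices, the parity of the
position in the vertex order is a proper 2-colouring, and the graph has no triangle.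

Five pages suffice for the natural order of `ℤ_{2n}`: short edges `{a, a + 1}` cross nothing and
long edges `{a, a + 2}` cross only their neighbours `{a ± 1, a ± 1 + 2}`, so short edges can
alternate between two pages and long edges cycle through three, up to a repair near the end when
`6 ∤ 2n`.
-/

open Finset

section MatchingBook

variable {V W : Type*} {G : SimpleGraph V} {H : SimpleGraph W} {k : ℕ}

theorem IsMBE.comap {f : W → ℕ} {page : Sym2 W → ℕ} (φ : G ↪g H) (h : IsMBE H k f page) :
    IsMBE G k (f ∘ φ) (page ∘ Sym2.map φ) := by
  obtain ⟨hinj, hlt, hcross, hmatch⟩ := h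
  refine ⟨hinj.comp φ.injective, fun u v huv => ?_, fun u v x y huv hxy hp => ?_,
    fun u v w huv huw hvw => ?_⟩
  · exact hlt _ _ (φ.map_adj_iff.2 huv)
  · exact hcross _ _ _ _ (φ.map_adj_iff.2 huv) (φ.map_adj_iff.2 hxy) hp
  · exact hmatch _ _ _ (φ.map_adj_iff.2 huv) (φ.map_adj_iff.2 huw) (φ.injective.ne hvw)

theorem mbt_congr (e : G ≃g H) : mbt G = mbt H := by
  unfold mbt
  congr 1
  ext k
  exact ⟨fun ⟨_, _, h⟩ => ⟨_, _, h.comap e.symm.toEmbedding⟩,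
    fun ⟨_, _, h⟩ => ⟨_, _, h.comap e.toEmbedding⟩⟩

theorem deg_iso_apply (e : G ≃g H) (v : V) : deg H (e v) = deg G v := by
  rw [deg, deg, ← Set.ncard_image_of_injective _ e.injective]
  congr 1
  ext w
  simp only [mem_neighborSet, Set.mem_image]
  exact ⟨fun hw => ⟨e.symm w, by simpa using e.symm.map_adj_iff.2 hw, e.apply_symm_apply w⟩,
    by rintro ⟨x, hx, rfl⟩; exact e.map_adj_iff.2 hx⟩

theorem maxDeg_eq_of_forall_deg_eq [Fintype V] [Nonempty V] {d : ℕ} (h : ∀ v, deg G v = d) :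
    maxDeg G = d := by
  rw [maxDeg, funext h, Finset.sup_const univ_nonempty]

theorem card_filter_lt_eq_of_lt [Fintype V] {f : V → ℕ} (hf : Function.Injective f) {u v : V}
    (huv : f u < f v) :
    #{y | f y < f v} = #{y | f y < f u} + #{y | f u < f y ∧ f y < f v} + 1 := by
  classical
  have hsplit : ({y | f y < f v} : Finset V) =
      ({y | f y < f u} : Finset V) ∪ insert u ({y | f u < f y ∧ f y < f v} : Finset V) := by
    ext y
    simp only [mem_filter, mem_univ, true_and, mem_union, mem_insert]
    constructor
    · intro hy
      rcases lt_trichotomy (f y) (f u) with h | h | h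
      exacts [Or.inl h, Or.inr (Or.inl (hf h)), Or.inr (Or.inr ⟨h, hy⟩)]
    · rintro (hy | rfl | hy) <;> omega
  rw [hsplit, card_union_of_disjoint, card_insert_of_notMem]
  · ring
  · simp
  · simp only [Finset.disjoint_left, mem_filter, mem_univ, true_and, mem_insert]
    rintro y hy (rfl | hy') <;> omega

variable {f : V → ℕ} {page : Sym2 V → ℕ}

theorem IsMBE.mapsTo_page (h : IsMBE G k f page) (v : V) :
    Set.MapsTo (fun w => page s(v, w)) (G.neighborSet v) (Set.Iio k) :=
  fun _ hw => h.2.1 _ _ hw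

theorem IsMBE.injOn_page (h : IsMBE G k f page) (v : V) :
    Set.InjOn (fun w => page s(v, w)) (G.neighborSet v) :=
  fun _ hw _ hw' heq => by_contra fun hne => h.2.2.2 v _ _ hw hw' hne heq

theorem IsMBE.deg_le (h : IsMBE G k f page) (v : V) : deg G v ≤ k := by
  simpa [deg, Set.ncard_Iio_nat] using
    Set.ncard_le_ncard_of_injOn _ (h.mapsTo_page v) (h.injOn_page v) (Set.finite_Iio k)

theorem IsMBE.exists_adj_page_eq (h : IsMBE G k f page) {v : V} (hv : deg G v = k) {p : ℕ}
    (hp : p < k) : ∃ w, G.Adj v w ∧ page s(v, w) = p := by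
  have himage : (fun w => page s(v, w)) '' G.neighborSet v = Set.Iio k :=
    Set.eq_of_subset_of_ncard_le (h.mapsTo_page v).image_subset
      (by rw [Set.ncard_Iio_nat, (h.injOn_page v).ncard_image]; exact hv.ge) (Set.finite_Iio k)
  exact (Set.ext_iff.1 himage p).2 hp

theorem IsMBE.between_of_page_eq (h : IsMBE G k f page) {u v x y : V} (huv : G.Adj u v)
    (hxy : G.Adj x y) (hp : page s(x, y) = page s(u, v)) (hyu : y ≠ u) (hyv : y ≠ v)
    (hux : f u < f x) (hxv : f x < f v) : f u < f y ∧ f y < f v := by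
  refine ⟨(h.1.ne hyu).symm.lt_of_le (not_lt.1 fun hyu' => ?_),
    (h.1.ne hyv).lt_of_le (not_lt.1 fun hvy => ?_)⟩
  · exact h.2.2.1 _ _ _ _ hxy.symm huv (Sym2.eq_swap ▸ hp) ⟨hyu', hux, hxv⟩
  · exact h.2.2.1 _ _ _ _ huv hxy hp.symm ⟨hux, hxv, hvy⟩

theorem IsMBE.even_card_between [Fintype V] (h : IsMBE G k f page) (hreg : ∀ v, deg G v = k)
    {u v : V} (huv : G.Adj u v) : Even #{x | f u < f x ∧ f x < f v} := by
  choose σ hσadj hσpage using fun x => h.exists_adj_page_eq (hreg x) (h.2.1 u v huv)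
  have partner_unique : ∀ {x y}, G.Adj x y → page s(x, y) = page s(u, v) → y = σ x :=
    fun hxy hp => by_contra fun hne => h.2.2.2 _ _ _ hxy (hσadj _) hne (hp.trans (hσpage _).symm)
  have σ_σ : ∀ x, σ (σ x) = x := fun x =>
    (partner_unique (hσadj x).symm (Sym2.eq_swap ▸ hσpage x)).symm
  have σ_u : σ u = v := (partner_unique huv rfl).symm
  have σ_v : σ v = u := σ_u ▸ σ_σ u
  rw [← ZMod.natCast_eq_zero_iff_even, card_eq_sum_ones, Nat.cast_sum]
  refine sum_involution (fun x _ => σ x) (fun _ _ => rfl) (fun x _ _ => (hσadj x).ne')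
    (fun x hx => ?_) (fun x _ => σ_σ x)
  simp only [mem_filter, mem_univ, true_and] at hx ⊢
  refine h.between_of_page_eq huv (hσadj x) (hσpage x) (fun hσx => ?_) (fun hσx => ?_) hx.1 hx.2
  · exact hx.2.ne (by rw [← σ_σ x, hσx, σ_u])
  · exact hx.1.ne' (by rw [← σ_σ x, hσx, σ_v])

theorem IsMBE.colorable_two [Fintype V] (h : IsMBE G k f page) (hreg : ∀ v, deg G v = k) :
    G.Colorable 2 := by
  have parity_ne : ∀ {u v}, G.Adj u v → f u < f v →
      (Even #{y | f y < f u} ↔ ¬Even #{y | f y < f v}) := by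
    intro u v huv hlt
    rw [card_filter_lt_eq_of_lt h.1 hlt, Nat.even_add_one, Nat.even_add,
      iff_true_intro (h.even_card_between hreg huv), iff_true, not_not]
  refine (Coloring.mk (fun x => decide (Even #{y | f y < f x})) fun {u v} huv => ?_).colorable
  rw [ne_eq, decide_eq_decide]
  rcases (h.1.ne huv.ne).lt_or_gt with hlt | hgt
  · have := parity_ne huv hlt
    tauto
  · have := parity_ne huv.symm hgt
    tauto

end MatchingBook

section Circulant

variable {m : ℕ} [NeZero m]

theorem Fin.val_one_of_two_le (hm : 2 ≤ m) : ((1 : Fin m) : ℕ) = 1 := by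
  rw [Fin.val_one', Nat.mod_eq_of_lt hm]

theorem Fin.val_two_of_three_le (hm : 3 ≤ m) : ((2 : Fin m) : ℕ) = 2 := by
  simp [Nat.mod_eq_of_lt hm]

theorem Fin.eq_add_one_iff (hm : 2 ≤ m) {a b : Fin m} :
    b = a + 1 ↔ (b : ℕ) = a + 1 ∨ (b : ℕ) + m = a + 1 := by
  rw [Fin.ext_iff, Fin.val_add_eq_ite, Fin.val_one_of_two_le hm]
  split_ifs <;> omega

theorem Fin.eq_add_two_iff (hm : 3 ≤ m) {a b : Fin m} :
    b = a + 2 ↔ (b : ℕ) = a + 2 ∨ (b : ℕ) + m = a + 2 := by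
  rw [Fin.ext_iff, Fin.val_add_eq_ite, Fin.val_two_of_three_le hm]
  split_ifs <;> omega

theorem circulantG12_adj_iff (hm : 3 ≤ m) {u v : Fin m} :
    (circulantG12 m).Adj u v ↔ v = u + 1 ∨ v = u + 2 ∨ u = v + 1 ∨ u = v + 2 := by
  have hadd : ∀ (a b : Fin m) (d : Fin m), ((a : ℕ) + d) % m = b ↔ b = a + d := by
    simp [Fin.ext_iff, Fin.val_add, eq_comm]
  simp only [circulantG12, ← Fin.val_one_of_two_le (m := m) (by omega),
    ← Fin.val_two_of_three_le hm, hadd]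
  refine ⟨And.right, fun h => ⟨?_, h⟩⟩
  rintro rfl
  simp only [Fin.eq_add_one_iff (by omega : 2 ≤ m), Fin.eq_add_two_iff hm] at h
  omega

def circulantNbr (u : Fin m) : Fin 4 → Fin m := ![u + 1, u + 2, u - 1, u - 2]

theorem circulantG12_neighborSet (hm : 3 ≤ m) (u : Fin m) :
    (circulantG12 m).neighborSet u = Set.range (circulantNbr u) := by
  ext v
  simp only [mem_neighborSet, circulantG12_adj_iff hm, Set.mem_range, Fin.exists_fin_succ,
    circulantNbr, Matrix.cons_val_zero, Matrix.cons_val_succ, IsEmpty.exists_iff, or_false,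
    sub_eq_iff_eq_add]
  tauto

theorem circulantNbr_injective (hm : 5 ≤ m) (u : Fin m) :
    Function.Injective (circulantNbr u) := by
  intro i j hij
  fin_cases i <;> fin_cases j <;> simp [circulantNbr] at hij ⊢ <;>
    simp only [eq_sub_iff_add_eq, sub_eq_iff_eq_add, Fin.ext_iff, Fin.val_add_eq_ite,
      Fin.val_one_of_two_le (m := m) (by omega), Fin.val_two_of_three_le (m := m) (by omega)]
      at hij <;>
    (try split_ifs at hij) <;> omega

theorem circulantG12_deg (hm : 5 ≤ m) (u : Fin m) : deg (circulantG12 m) u = 4 := by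
  rw [deg, circulantG12_neighborSet (by omega), Set.ncard_range_of_injective
    (circulantNbr_injective hm u), Nat.card_eq_fintype_card, Fintype.card_fin]

theorem circulantG12_not_cliqueFree_three (hm : 3 ≤ m) : ¬(circulantG12 m).CliqueFree 3 := by
  intro h
  refine h {0, 1, 2} (is3Clique_triple_iff.2 ?_)
  simp only [circulantG12_adj_iff hm]
  exact ⟨Or.inl (zero_add 1).symm, Or.inr (Or.inl (zero_add 2).symm),
    Or.inl ((Fin.eq_add_one_iff (by omega)).2 (Or.inl (by
      rw [Fin.val_one_of_two_le (by omega), Fin.val_two_of_three_le hm])))⟩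

theorem five_le_of_isMBE_circulantG12 (hm : 5 ≤ m) {k : ℕ} {f : Fin m → ℕ}
    {page : Sym2 (Fin m) → ℕ} (h : IsMBE (circulantG12 m) k f page) : 5 ≤ k := by
  have h4 : 4 ≤ k := circulantG12_deg hm 0 ▸ h.deg_le 0
  refine h4.lt_of_ne fun hk => circulantG12_not_cliqueFree_three (m := m) (by omega) ?_
  exact (h.colorable_two fun v => hk ▸ circulantG12_deg hm v).cliqueFree (by norm_num)

end Circulant

section CirculantPaging

variable {m : ℕ} [NeZero m] (S L : Fin m → ℕ)

/-- The page of the edge `{a, b}`, `a ≤ b`, of `circulantG12 m` when `S c` and `L c` are the pages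
of `{c, c + 1}` and `{c, c + 2}`. -/
def pageOfLE (a b : Fin m) : ℕ :=
  if b = a + 1 then S a else if b = a + 2 then L a else if a = b + 1 then S b else L b

def circulantPage : Sym2 (Fin m) → ℕ :=
  Sym2.lift ⟨fun a b => pageOfLE S L (min a b) (max a b), fun a b => by
    dsimp only
    rw [min_comm, max_comm]⟩

variable {S L}

theorem circulantPage_mk_add_one (hm : 5 ≤ m) (a : Fin m) :
    circulantPage S L s(a, a + 1) = S a := by
  have h1 := Fin.val_one_of_two_le (m := m) (by omega)
  have h2 := Fin.val_two_of_three_le (m := m) (by omega)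
  simp only [circulantPage, Sym2.lift_mk]
  rcases le_total a (a + 1) with h | h
  · rw [min_eq_left h, max_eq_right h, pageOfLE, if_pos rfl]
  · rw [min_eq_right h, max_eq_left h, pageOfLE, if_neg, if_neg, if_pos rfl] <;>
    simp only [Fin.ext_iff, Fin.le_iff_val_le_val, Fin.val_add_eq_ite, h1, h2] at h ⊢ <;>
    split_ifs at h ⊢ <;> omega

theorem circulantPage_mk_add_two (hm : 5 ≤ m) (a : Fin m) :
    circulantPage S L s(a, a + 2) = L a := by
  have h1 := Fin.val_one_of_two_le (m := m) (by omega)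
  have h2 := Fin.val_two_of_three_le (m := m) (by omega)
  simp only [circulantPage, Sym2.lift_mk]
  rcases le_total a (a + 2) with h | h
  · rw [min_eq_left h, max_eq_right h, pageOfLE, if_neg, if_pos rfl]
    simp only [Fin.ext_iff, Fin.le_iff_val_le_val, Fin.val_add_eq_ite, h1, h2] at h ⊢
    split_ifs at h ⊢ <;> omega
  · rw [min_eq_right h, max_eq_left h, pageOfLE, if_neg, if_neg, if_neg] <;>
    simp only [Fin.ext_iff, Fin.le_iff_val_le_val, Fin.val_add_eq_ite, h1, h2] at h ⊢ <;>
    split_ifs at h ⊢ <;> omega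

theorem circulantPage_mk_circulantNbr (hm : 5 ≤ m) (u : Fin m) (i : Fin 4) :
    circulantPage S L s(u, circulantNbr u i) = ![S u, L u, S (u - 1), L (u - 2)] i := by
  fin_cases i
  · exact circulantPage_mk_add_one hm u
  · exact circulantPage_mk_add_two hm u
  · simpa [circulantNbr, Sym2.eq_swap] using circulantPage_mk_add_one (S := S) (L := L) hm (u - 1)
  · simpa [circulantNbr, Sym2.eq_swap] using circulantPage_mk_add_two (S := S) (L := L) hm (u - 2)

theorem circulantG12_crossing (hm : 5 ≤ m) {u v x y : Fin m} (huv : (circulantG12 m).Adj u v)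
    (hxy : (circulantG12 m).Adj x y) (hux : u < x) (hxv : x < v) (hvy : v < y) :
    ∃ a, s(u, v) = s(a, a + 2) ∧ s(x, y) = s(a + 1, a + 1 + 2) ∨
      s(x, y) = s(a, a + 2) ∧ s(u, v) = s(a + 1, a + 1 + 2) := by
  have h1 := Fin.val_one_of_two_le (m := m) (by omega)
  have h2 := Fin.val_two_of_three_le (m := m) (by omega)
  have succ_of_val : ∀ a b : Fin m, (b : ℕ) = a + 1 ∨ (b : ℕ) + m = a + 1 → b = a + 1 :=
    fun a b => (Fin.eq_add_one_iff (by omega)).2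
  rw [circulantG12_adj_iff (by omega)] at huv hxy
  rcases huv with rfl | rfl | rfl | rfl <;> rcases hxy with rfl | rfl | rfl | rfl <;>
    simp only [Fin.lt_def, Fin.val_add_eq_ite, h1, h2] at hux hxv hvy <;>
    split_ifs at hux hxv hvy <;> (try omega)
  · exact ⟨u, Or.inl ⟨rfl, by rw [succ_of_val u x (by omega)]⟩⟩
  · exact ⟨y, Or.inr ⟨Sym2.eq_swap, by rw [succ_of_val y u (by omega)]⟩⟩
  · exact ⟨x, Or.inr ⟨rfl, by rw [succ_of_val x v (by omega), Sym2.eq_swap]⟩⟩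
  · exact ⟨v, Or.inl ⟨Sym2.eq_swap, by rw [succ_of_val v y (by omega), Sym2.eq_swap]⟩⟩

variable (S L) in
/-- The four edges at `u` need distinct pages, and so do consecutive long edges, the only crossing
pairs (`circulantG12_crossing`). -/
structure IsCirculantPaging : Prop where
  nodup_incident : ∀ u, [S u, L u, S (u - 1), L (u - 2)].Nodup
  long_ne : ∀ a, L a ≠ L (a + 1)

theorem isMBE_circulantG12 (hm : 5 ≤ m) {k : ℕ} (hSL : IsCirculantPaging S L)
    (hS : ∀ a, S a < k) (hL : ∀ a, L a < k) :
    IsMBE (circulantG12 m) k Fin.val (circulantPage S L) := by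
  have hnbr : ∀ {u v}, (circulantG12 m).Adj u v → ∃ i, circulantNbr u i = v := fun huv => by
    rwa [← mem_neighborSet, circulantG12_neighborSet (by omega)] at huv
  refine ⟨Fin.val_injective, fun u v huv => ?_, fun u v x y huv hxy hp => ?_,
    fun u v w huv huw hvw => ?_⟩
  · obtain ⟨i, rfl⟩ := hnbr huv
    rw [circulantPage_mk_circulantNbr hm]
    fin_cases i <;> simp [hS, hL]
  · rintro ⟨hux, hxv, hvy⟩
    obtain ⟨a, ⟨hl, hr⟩ | ⟨hl, hr⟩⟩ := circulantG12_crossing hm huv hxy hux hxv hvy <;>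
      rw [hl, hr, circulantPage_mk_add_two hm, circulantPage_mk_add_two hm] at hp
    exacts [hSL.long_ne a hp, hSL.long_ne a hp.symm]
  · obtain ⟨i, rfl⟩ := hnbr huv
    obtain ⟨j, rfl⟩ := hnbr huw
    rw [circulantPage_mk_circulantNbr hm, circulantPage_mk_circulantNbr hm]
    exact (List.nodup_ofFn.1 (by simpa using hSL.nodup_incident u)).ne (ne_of_apply_ne _ hvw)

theorem mbt_circulantG12_eq_five (hm : 5 ≤ m) (hSL : IsCirculantPaging S L)
    (hS : ∀ a, S a < 5) (hL : ∀ a, L a < 5) : mbt (circulantG12 m) = 5 :=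
  le_antisymm (Nat.sInf_le ⟨_, _, isMBE_circulantG12 hm hSL hS hL⟩)
    (le_csInf ⟨5, _, _, isMBE_circulantG12 hm hSL hS hL⟩
      fun _ ⟨_, _, h⟩ => five_le_of_isMBE_circulantG12 hm h)

end CirculantPaging

section Pattern

/-- The pages of the short edge `{i, i + 1}` and of the long edge `{i, i + 2}` of `circulantG12 m`,
`m` even, in terms of `r = m % 6` and the distance `d = m - i` to the end. Away from the end they
are `i % 2` and `2 + i % 3`, which close up around the cycle only when `6 ∣ m`; otherwise the last
five or six positions are repaired by hand. -/
def shortPage (r d : ℕ) : ℕ :=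
  if r = 2 ∧ d ≤ 5 then [3, 0, 4, 0, 2].getD (d - 1) 0
  else if r = 4 ∧ d ≤ 6 then [3, 2, 4, 2, 4, 3].getD (d - 1) 0
  else d % 2

def longPage (r d : ℕ) : ℕ :=
  if r = 2 ∧ d ≤ 5 then [4, 1, 2, 3, 1].getD (d - 1) 0
  else if r = 4 ∧ d ≤ 6 then [4, 1, 0, 3, 1, 0].getD (d - 1) 0
  else 2 + (r + 2 * d) % 3

theorem shortPage_lt_five (r d : ℕ) : shortPage r d < 5 := by
  unfold shortPage
  split_ifs with h₁ h₂
  · obtain ⟨-, hd⟩ := h₁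
    interval_cases d <;> decide
  · obtain ⟨-, hd⟩ := h₂
    interval_cases d <;> decide
  · omega

theorem longPage_lt_five (r d : ℕ) : longPage r d < 5 := by
  unfold longPage
  split_ifs with h₁ h₂
  · obtain ⟨-, hd⟩ := h₁
    interval_cases d <;> decide
  · obtain ⟨-, hd⟩ := h₂
    interval_cases d <;> decide
  · omega

theorem shortPage_add_six (r : ℕ) {d : ℕ} (hd : 7 ≤ d) :
    shortPage r (d + 6) = shortPage r d := by
  rw [shortPage, shortPage, if_neg (by omega), if_neg (by omega), if_neg (by omega),
    if_neg (by omega)]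
  omega

theorem longPage_add_six (r : ℕ) {d : ℕ} (hd : 7 ≤ d) :
    longPage r (d + 6) = longPage r d := by
  rw [longPage, longPage, if_neg (by omega), if_neg (by omega), if_neg (by omega),
    if_neg (by omega)]
  omega

/-- The conditions of `IsCirculantPaging` at the vertex at distance `d` from the end. -/
theorem pages_window_nodup (r d : ℕ) (hr : r = 0 ∨ r = 2 ∨ r = 4) (hd : 1 ≤ d) :
    [shortPage r d, longPage r d, shortPage r (d + 1), longPage r (d + 2)].Nodup ∧
      longPage r (d + 1) ≠ longPage r d := by
  induction d using Nat.strong_induction_on with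
  | _ d ih =>
    rcases lt_or_ge d 13 with hd13 | hd13
    · interval_cases d <;> rcases hr with rfl | rfl | rfl <;> decide
    · obtain ⟨e, rfl⟩ : ∃ e, d = e + 6 := ⟨d - 6, by omega⟩
      simp only [add_right_comm _ 6, shortPage_add_six r (by omega : 7 ≤ e),
        shortPage_add_six r (by omega : 7 ≤ e + 1), longPage_add_six r (by omega : 7 ≤ e),
        longPage_add_six r (by omega : 7 ≤ e + 1), longPage_add_six r (by omega : 7 ≤ e + 2)]
      exact ih e (by omega) (by omega)

theorem pages_wrap_window_nodup (m : ℕ) (hm : 6 ≤ m) (heven : Even m) :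
    [shortPage (m % 6) m, longPage (m % 6) m, shortPage (m % 6) 1, longPage (m % 6) 2].Nodup ∧
      longPage (m % 6) 1 ≠ longPage (m % 6) m ∧
    [shortPage (m % 6) (m - 1), longPage (m % 6) (m - 1), shortPage (m % 6) m,
      longPage (m % 6) 1].Nodup ∧ longPage (m % 6) m ≠ longPage (m % 6) (m - 1) := by
  induction m using Nat.strong_induction_on with
  | _ m ih =>
    rcases lt_or_ge m 18 with hm18 | hm18
    · obtain ⟨k, rfl⟩ := heven
      obtain ⟨hk₁, hk₂⟩ : 3 ≤ k ∧ k < 9 := by omega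
      interval_cases k <;> decide
    · obtain ⟨e, rfl⟩ : ∃ e, m = e + 6 := ⟨m - 6, by omega⟩
      have he : (e + 6) % 6 = e % 6 := by omega
      rw [he, show e + 6 - 1 = e - 1 + 6 by omega, shortPage_add_six _ (by omega : 7 ≤ e),
        shortPage_add_six _ (by omega : 7 ≤ e - 1), longPage_add_six _ (by omega : 7 ≤ e),
        longPage_add_six _ (by omega : 7 ≤ e - 1)]
      exact ih e (by omega) (by omega) ((Nat.even_add.1 heven).2 (by decide))

theorem isCirculantPaging_shortPage_longPage {m : ℕ} [NeZero m] (hm : 6 ≤ m) (heven : Even m) :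
    IsCirculantPaging (fun a : Fin m => shortPage (m % 6) (m - a))
      (fun a => longPage (m % 6) (m - a)) := by
  have hr : m % 6 = 0 ∨ m % 6 = 2 ∨ m % 6 = 4 := by
    obtain ⟨k, rfl⟩ := heven
    omega
  suffices h : ∀ u : Fin m,
      [shortPage (m % 6) (m - u), longPage (m % 6) (m - u), shortPage (m % 6) (m - ↑(u - 1)),
        longPage (m % 6) (m - ↑(u - 2))].Nodup ∧
      longPage (m % 6) (m - ↑(u - 1)) ≠ longPage (m % 6) (m - u) from
    ⟨fun u => (h u).1, fun a => by simpa using (h (a + 1)).2⟩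
  intro u
  have hb := (Fin.eq_add_one_iff (m := m) (by omega)).1 (sub_add_cancel u 1).symm
  have hc := (Fin.eq_add_two_iff (m := m) (by omega)).1 (sub_add_cancel u 2).symm
  have hu := u.isLt
  have hb' := (u - 1).isLt
  have hc' := (u - 2).isLt
  have hwrap := pages_wrap_window_nodup m hm heven
  obtain h | h | h : 2 ≤ (u : ℕ) ∨ (u : ℕ) = 0 ∨ (u : ℕ) = 1 := by omega
  · rw [show m - ↑(u - 1) = m - u + 1 by omega, show m - ↑(u - 2) = m - u + 2 by omega]
    exact pages_window_nodup (m % 6) (m - u) hr (by omega)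
  · rw [show m - ↑(u - 1) = 1 by omega, show m - ↑(u - 2) = 2 by omega, h, Nat.sub_zero]
    exact ⟨hwrap.1, hwrap.2.1⟩
  · rw [show m - ↑(u - 1) = m by omega, show m - ↑(u - 2) = 1 by omega, h]
    exact hwrap.2.2

theorem mbt_circulantG12 {m : ℕ} [NeZero m] (hm : 6 ≤ m) (heven : Even m) :
    mbt (circulantG12 m) = 5 :=
  mbt_circulantG12_eq_five (by omega) (isCirculantPaging_shortPage_longPage hm heven)
    (fun _ => shortPage_lt_five _ _) (fun _ => longPage_lt_five _ _)

end Pattern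

section TotalCycle

variable {n : ℕ} [NeZero n]

theorem cycleG_adj_iff (hn : 3 ≤ n) {i j : Fin n} :
    (cycleG n).Adj i j ↔ j = i + 1 ∨ i = j + 1 := by
  have hadd : ∀ a b : Fin n, ((a : ℕ) + 1) % n = b ↔ b = a + 1 := by
    simp [Fin.ext_iff, Fin.val_add, eq_comm]
  simp only [cycleG, hadd]
  refine ⟨And.right, fun h => ⟨?_, h⟩⟩
  rintro rfl
  simp only [Fin.eq_add_one_iff (by omega : 2 ≤ n)] at h
  omega

def cycleEdge (hn : 3 ≤ n) (i : Fin n) : (cycleG n).edgeSet :=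
  ⟨s(i, i + 1), (cycleG_adj_iff hn).2 (Or.inl rfl)⟩

theorem cycleEdge_surjective (hn : 3 ≤ n) : Function.Surjective (cycleEdge hn) := by
  rintro ⟨e, he⟩
  induction e using Sym2.ind with
  | _ a b =>
    rw [mem_edgeSet] at he
    rcases (cycleG_adj_iff hn).1 he with rfl | rfl
    · exact ⟨a, rfl⟩
    · exact ⟨b, Subtype.ext Sym2.eq_swap⟩

theorem cycleEdge_injective (hn : 3 ≤ n) : Function.Injective (cycleEdge hn) := by
  intro i j hij
  rcases Sym2.eq_iff.1 (congrArg Subtype.val hij) with ⟨h, -⟩ | ⟨h, h'⟩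
  · exact h
  · rw [h] at h'
    simp only [Fin.ext_iff, Fin.val_add_eq_ite, Fin.val_one_of_two_le (m := n) (by omega)] at h'
    split_ifs at h' <;> omega

theorem mem_cycleEdge (hn : 3 ≤ n) {i w : Fin n} :
    w ∈ (cycleEdge hn i : Sym2 (Fin n)) ↔ w = i ∨ w = i + 1 :=
  Sym2.mem_iff

def totalCycleAt (hn : 3 ≤ n) (p : Fin (2 * n)) : Fin n ⊕ (cycleG n).edgeSet :=
  if (p : ℕ) % 2 = 0 then .inl ⟨p / 2, Nat.div_lt_of_lt_mul p.isLt⟩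
  else .inr (cycleEdge hn ⟨p / 2, Nat.div_lt_of_lt_mul p.isLt⟩)

theorem totalCycleAt_bijective (hn : 3 ≤ n) : Function.Bijective (totalCycleAt hn) := by
  constructor
  · intro p q hpq
    unfold totalCycleAt at hpq
    split_ifs at hpq with hp hq hq
    · have h := congrArg Fin.val (Sum.inl_injective hpq)
      ext
      simp only at h
      omega
    · have h := congrArg Fin.val (cycleEdge_injective hn (Sum.inr_injective hpq))
      ext
      simp only at h
      omega
  · rintro (i | e)
    · exact ⟨⟨2 * i, by omega⟩, by simp [totalCycleAt]⟩
    · obtain ⟨i, rfl⟩ := cycleEdge_surjective hn e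
      refine ⟨⟨2 * i + 1, by omega⟩, ?_⟩
      simp only [totalCycleAt, Nat.mul_add_mod_self_left, Nat.mul_add_div two_pos]
      simp

theorem totalCycleAt_adj_iff (hn : 3 ≤ n) {p q : Fin (2 * n)} :
    (FGraph .T (cycleG n)).Adj (totalCycleAt hn p) (totalCycleAt hn q) ↔
      (circulantG12 (2 * n)).Adj p q := by
  have hp := p.isLt
  have hq := q.isLt
  rw [circulantG12_adj_iff (by omega)]
  simp only [Fin.eq_add_one_iff (by omega : 2 ≤ 2 * n),
    Fin.eq_add_two_iff (by omega : 3 ≤ 2 * n)]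
  unfold totalCycleAt
  split_ifs with hp2 hq2 hq2 <;>
    simp only [FGraph, derivedG, FOp.black, FOp.white, cycleG_adj_iff hn, mem_cycleEdge hn,
      true_and, ne_eq, (cycleEdge_injective hn).eq_iff, exists_eq_or_imp, exists_eq_left] <;>
    simp only [Fin.ext_iff, Fin.val_add_eq_ite, Fin.val_one_of_two_le (m := n) (by omega)] <;>
    split_ifs <;> omega

noncomputable def totalCycleIso (hn : 3 ≤ n) :
    circulantG12 (2 * n) ≃g FGraph .T (cycleG n) where
  toEquiv := Equiv.ofBijective _ (totalCycleAt_bijective hn)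
  map_rel_iff' := totalCycleAt_adj_iff hn

end TotalCycle

/-- For every `n ≥ 3`, the total graph `T(C_n)` is nearly dispersable:
`mbt(T(C_n)) = Δ(T(C_n)) + 1 = 5`. -/
theorem T_cycle_nearly_dispersable (n : ℕ) (hn : 3 ≤ n) :
    mbt (FGraph .T (cycleG n)) = maxDeg (FGraph .T (cycleG n)) + 1 ∧
      maxDeg (FGraph .T (cycleG n)) + 1 = 5 := by
  have : NeZero n := ⟨by omega⟩
  let e := totalCycleIso hn
  have hmaxDeg : maxDeg (FGraph .T (cycleG n)) = 4 := maxDeg_eq_of_forall_deg_eq fun v => by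
    rw [← e.apply_symm_apply v, deg_iso_apply, circulantG12_deg (by omega)]
  have hmbt : mbt (FGraph .T (cycleG n)) = 5 := by
    rw [← mbt_congr e, mbt_circulantG12 (by omega) (even_two_mul n)]
  omega
end

section
/- Let n ≥ 2 and let H be any finite dispersable bipartite graph with at least one edge (H is bipartite and mbt(H) = Δ(H) ≥ 1). Then P_n +_Q H is dispersable: mbt(P_n +_Q H) = Δ(P_n +_Q H). -/
open SimpleGraph

/-!
Order the copies of `Q(P_n)` by a `Δ(H)`-page matching book embedding of `H` and reverse the
copies of one colour class of `H`. The copies of an edge of `H` in the different columns then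
nest, so the vertical edges reuse the pages of `H`, and the copies need only one (`n = 2`) or
two (`n ≥ 3`) pages beyond them, plus the pages of the path `e₀ e₁ …` of edge vertices, whose
edges join consecutive positions and cross nothing. The resulting number of pages is the
degree of `v₁` in a column of maximal `H`-degree, or `4`, the degree of an inner edge vertex.
-/

open Sum

section MatchingBookThickness

variable {V : Type*} {G : SimpleGraph V} {k : ℕ} {f : V → ℕ} {page : Sym2 V → ℕ}

theorem exists_isMBE [Fintype V] (G : SimpleGraph V) : ∃ k f page, IsMBE G k f page := by
  classical
  let eV := Fintype.equivFin V
  let eS := Fintype.equivFin (Sym2 V)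
  refine ⟨Fintype.card (Sym2 V), fun v => eV v, fun s => eS s, ?_, ?_, ?_, ?_⟩
  · exact fun a b hab => eV.injective (Fin.ext hab)
  · exact fun u v _ => (eS _).isLt
  · intro u v x y _ _ hp
    have hs : s(u, v) = s(x, y) := eS.injective (Fin.ext hp)
    rcases Sym2.eq_iff.mp hs with ⟨rfl, rfl⟩ | ⟨rfl, rfl⟩ <;> omega
  · intro u v w _ _ hvw hp
    exact hvw (Sym2.congr_right.mp (eS.injective (Fin.ext hp)))

theorem maxDeg_le_of_isMBE [Fintype V] (h : IsMBE G k f page) : maxDeg G ≤ k := by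
  classical
  obtain ⟨-, hlt, -, hmatch⟩ := h
  refine Finset.sup_le fun v _ => ?_
  calc deg G v = (G.neighborSet v).toFinset.card := Set.ncard_eq_toFinset_card' _
    _ ≤ (Finset.range k).card := by
      refine Finset.card_le_card_of_injOn (fun u => page s(v, u)) ?_ ?_
      · intro u hu
        simpa using hlt v u (by simpa using hu)
      · intro u₁ h₁ u₂ h₂ hp
        by_contra hne
        exact hmatch v u₁ u₂ (by simpa using h₁) (by simpa using h₂) hne hp
    _ = k := Finset.card_range k

theorem mbt_le_of_isMBE (h : IsMBE G k f page) : mbt G ≤ k :=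
  Nat.sInf_le ⟨f, page, h⟩

theorem exists_isMBE_mbt [Fintype V] (G : SimpleGraph V) : ∃ f page, IsMBE G (mbt G) f page :=
  Nat.sInf_mem (exists_isMBE G)

theorem maxDeg_le_mbt [Fintype V] (G : SimpleGraph V) : maxDeg G ≤ mbt G :=
  le_csInf (exists_isMBE G) fun _ ⟨_, _, h⟩ => maxDeg_le_of_isMBE h

theorem mbt_eq_maxDeg_of_isMBE [Fintype V] (h : IsMBE G k f page) (hk : k ≤ maxDeg G) :
    mbt G = maxDeg G :=
  le_antisymm ((mbt_le_of_isMBE h).trans hk) (maxDeg_le_mbt G)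

theorem ncard_le_maxDeg [Fintype V] {v : V} {s : Set V} (hs : s ⊆ G.neighborSet v) :
    s.ncard ≤ maxDeg G :=
  (Set.ncard_le_ncard hs).trans (Finset.le_sup (f := deg G) (Finset.mem_univ v))

theorem exists_deg_eq_maxDeg [Fintype V] (h : 0 < maxDeg G) :
    ∃ v, deg G v = maxDeg G := by
  have : Nonempty V := by
    by_contra hV
    rw [not_nonempty_iff] at hV
    simp [maxDeg, Finset.univ_eq_empty] at h
  obtain ⟨v, -, hv⟩ := Finset.exists_mem_eq_sup Finset.univ Finset.univ_nonempty (deg G)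
  exact ⟨v, hv.symm⟩

end MatchingBookThickness

theorem not_crossing_of_adjacent_left {a b c d : ℕ} (h : b = a + 1 ∨ a = b + 1) :
    ¬(a < c ∧ c < b ∧ b < d) := by
  omega

theorem not_crossing_of_adjacent_right {a b c d : ℕ} (h : d = c + 1 ∨ c = d + 1) :
    ¬(a < c ∧ c < b ∧ b < d) := by
  omega

section BlockLayout

variable {X W : Type*} {fH : W → ℕ} {c : W → Bool} {M : ℕ} {t : X → ℕ}

def blockPos (fH : W → ℕ) (c : W → Bool) (M : ℕ) (t : X → ℕ) (p : X × W) : ℕ :=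
  fH p.2 * (M + 1) + if c p.2 then M - t p.1 else t p.1

theorem blockPos_lt_blockPos (ht : ∀ x, t x ≤ M) {p q : X × W} (h : fH p.2 < fH q.2) :
    blockPos fH c M t p < blockPos fH c M t q := by
  have hblock : (fH p.2 + 1) * (M + 1) ≤ fH q.2 * (M + 1) := Nat.mul_le_mul_right _ h
  rw [add_one_mul] at hblock
  have := ht p.1
  unfold blockPos
  split_ifs <;> omega

theorem le_of_blockPos_lt (ht : ∀ x, t x ≤ M) {p q : X × W}
    (h : blockPos fH c M t p < blockPos fH c M t q) : fH p.2 ≤ fH q.2 :=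
  not_lt.mp fun hlt => (blockPos_lt_blockPos ht hlt).asymm h

theorem blockPos_lt_blockPos_iff (ht : ∀ x, t x ≤ M) {x y : X} {w : W} :
    blockPos fH c M t (x, w) < blockPos fH c M t (y, w) ↔
      if c w then t y < t x else t x < t y := by
  have := ht x
  have := ht y
  simp only [blockPos]
  split_ifs <;> omega

theorem blockPos_injective (hfH : Function.Injective fH) (ht_inj : Function.Injective t)
    (ht : ∀ x, t x ≤ M) : Function.Injective (blockPos fH c M t) := by
  rintro ⟨x, w⟩ ⟨y, w'⟩ h
  obtain rfl : w = w' := by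
    refine hfH (le_antisymm (not_lt.mp fun hlt => ?_) (not_lt.mp fun hlt => ?_))
    · exact (blockPos_lt_blockPos ht hlt).ne' h
    · exact (blockPos_lt_blockPos ht hlt).ne h
  have := ht x
  have := ht y
  simp only [blockPos] at h
  obtain rfl : x = y := ht_inj (by split_ifs at h <;> omega)
  rfl

theorem blockPos_adjacent (ht : ∀ x, t x ≤ M) {x y : X} {w : W}
    (h : t y = t x + 1 ∨ t x = t y + 1) :
    blockPos fH c M t (y, w) = blockPos fH c M t (x, w) + 1 ∨
      blockPos fH c M t (x, w) = blockPos fH c M t (y, w) + 1 := by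
  have := ht x
  have := ht y
  simp only [blockPos]
  split_ifs <;> omega

theorem not_crossing_vertical {H : SimpleGraph W} {D : ℕ} {pg : Sym2 W → ℕ}
    (hH : IsMBE H D fH pg) (c : H.Coloring Bool) (ht : ∀ x, t x ≤ M) {x y : X} {wx wy wu wv : W}
    (hxy : H.Adj wx wy) (huv : H.Adj wu wv) (hpg : pg s(wx, wy) = pg s(wu, wv)) :
    ¬(blockPos fH c M t (x, wx) < blockPos fH c M t (y, wu) ∧
      blockPos fH c M t (y, wu) < blockPos fH c M t (x, wy) ∧
      blockPos fH c M t (x, wy) < blockPos fH c M t (y, wv)) := by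
  rintro ⟨h₁, h₂, h₃⟩
  obtain ⟨hinj, -, hcross, hmatch⟩ := hH
  have l₁ : fH wx ≤ fH wu := le_of_blockPos_lt ht h₁
  have l₂ : fH wu ≤ fH wy := le_of_blockPos_lt ht h₂
  have l₃ : fH wy ≤ fH wv := le_of_blockPos_lt ht h₃
  by_cases hxu : wx = wu
  · subst hxu
    by_cases hyv : wy = wv
    · subst hyv
      -- the same edge of `H` in two columns: its ends have different colours, so the two
      -- columns appear in opposite orders in the two blocks and the vertical edges nest
      rw [blockPos_lt_blockPos_iff ht] at h₁ h₃
      have hcol := c.valid hxy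
      revert h₁ h₃ hcol
      cases c wx <;> cases c wy <;> simp <;> omega
    · exact hmatch wx wy wv hxy huv hyv hpg
  have l₁' : fH wx < fH wu := lt_of_le_of_ne l₁ (hinj.ne hxu)
  by_cases huy : wu = wy
  · subst huy
    have hxv : wx ≠ wv := by rintro rfl; omega
    exact hmatch wu wx wv hxy.symm huv hxv (by rwa [Sym2.eq_swap] at hpg)
  have l₂' : fH wu < fH wy := lt_of_le_of_ne l₂ (hinj.ne huy)
  by_cases hyv : wy = wv
  · subst hyv
    rw [Sym2.eq_swap, Sym2.eq_swap (a := wu)] at hpg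
    exact hmatch wy wx wu hxy.symm huv.symm hxu hpg
  exact hcross wx wy wu wv hxy huv hpg ⟨l₁', l₂', lt_of_le_of_ne l₃ (hinj.ne hyv)⟩

theorem not_crossing_horizontal {K : SimpleGraph X} {k : ℕ} {page : Sym2 X → ℕ}
    (hfH : Function.Injective fH) (hK : IsMBE K k t page)
    (ht : ∀ x, t x ≤ M) {a b x y : X} {w w' : W} (hab : K.Adj a b) (hxy : K.Adj x y)
    (hp : page s(a, b) = page s(x, y)) :
    ¬(blockPos fH c M t (a, w) < blockPos fH c M t (x, w') ∧
      blockPos fH c M t (x, w') < blockPos fH c M t (b, w) ∧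
      blockPos fH c M t (b, w) < blockPos fH c M t (y, w')) := by
  rintro ⟨h₁, h₂, h₃⟩
  obtain rfl : w = w' := hfH (le_antisymm (le_of_blockPos_lt ht h₁) (le_of_blockPos_lt ht h₂))
  simp only [blockPos_lt_blockPos_iff ht] at h₁ h₂ h₃
  split_ifs at h₁ h₂ h₃
  · rw [Sym2.eq_swap, Sym2.eq_swap (a := x)] at hp
    exact hK.2.2.1 y x b a hxy.symm hab.symm hp.symm ⟨h₃, h₂, h₁⟩
  · exact hK.2.2.1 a b x y hab hxy hp ⟨h₁, h₂, h₃⟩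

end BlockLayout

section ColumnLayout

variable {V E : Type*}

/-- A layout of `K = F(G)` to be repeated in every copy of `G +_F H`, reversed in the copies of one
colour class of `H`; the vertical edges in the column of `u` take the page `p` of `H` to
`σ (inl u) p`. -/
structure IsColumnLayout (K : SimpleGraph (V ⊕ E)) (D k M : ℕ) (t : V ⊕ E → ℕ)
    (page : Sym2 (V ⊕ E) → ℕ) (σ : V ⊕ E → ℕ → ℕ) : Prop where
  isMBE : IsMBE K k t page
  le_bound : ∀ x, t x ≤ M
  relabel_lt : ∀ u p, p < D → σ (inl u) p < k
  relabel_inj : ∀ u v p q, p < D → q < D → σ (inl u) p = σ (inl v) q → p = q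
  relabel_ne_page : ∀ u y p, p < D → K.Adj (inl u) y → σ (inl u) p ≠ page s(inl u, y)
  adjacent_of_relabel_eq_page : ∀ u p x y, p < D → K.Adj x y → σ (inl u) p = page s(x, y) →
    t y = t x + 1 ∨ t x = t y + 1

end ColumnLayout

section FSumPage

variable {X W : Type*} {pg : Sym2 W → ℕ} {page : Sym2 X → ℕ} {σ : X → ℕ → ℕ}

open Classical in
noncomputable def fsumPage (pg : Sym2 W → ℕ) (page : Sym2 X → ℕ) (σ : X → ℕ → ℕ) :
    Sym2 (X × W) → ℕ :=
  Sym2.lift ⟨fun p q => if p.1 = q.1 then σ p.1 (pg s(p.2, q.2)) else page s(p.1, q.1), by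
    intro p q
    dsimp only
    by_cases h : p.1 = q.1
    · rw [if_pos h, if_pos h.symm, h, Sym2.eq_swap]
    · rw [if_neg h, if_neg (Ne.symm h), Sym2.eq_swap]⟩

theorem fsumPage_mk_self {x : X} {w w' : W} :
    fsumPage pg page σ s((x, w), (x, w')) = σ x (pg s(w, w')) := by
  simp [fsumPage]

theorem fsumPage_mk_of_ne {x y : X} {w w' : W} (h : x ≠ y) :
    fsumPage pg page σ s((x, w), (y, w')) = page s(x, y) := by
  simp [fsumPage, h]

end FSumPage

section FSumEmbedding

variable {V W : Type*} {F : FOp} {G : SimpleGraph V} {H : SimpleGraph W} {D k M : ℕ}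
  {fH : W → ℕ} {pg : Sym2 W → ℕ} {t : V ⊕ G.edgeSet → ℕ}
  {page : Sym2 (V ⊕ G.edgeSet) → ℕ} {σ : V ⊕ G.edgeSet → ℕ → ℕ}

theorem fsum_adj_mk {x y : V ⊕ G.edgeSet} {w w' : W} :
    (FSum F G H).Adj (x, w) (y, w') ↔
      (x = y ∧ (∃ u, x = inl u) ∧ H.Adj w w') ∨ (w = w' ∧ (FGraph F G).Adj x y) :=
  Iff.rfl

theorem deg_add_ncard_le_maxDeg_fsum [Fintype ((V ⊕ G.edgeSet) × W)] (u : V) (w : W)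
    {E : Set G.edgeSet} (hE : ∀ e ∈ E, u ∈ (e : Sym2 V)) :
    deg H w + E.ncard ≤ maxDeg (FSum F G H) := by
  have hinl : Function.Injective fun w' : W => ((inl u : V ⊕ G.edgeSet), w') :=
    fun _ _ h => (Prod.ext_iff.mp h).2
  have hinr : Function.Injective fun e : G.edgeSet => ((inr e : V ⊕ G.edgeSet), w) :=
    fun _ _ h => inr_injective (Prod.ext_iff.mp h).1
  have hdisj : Disjoint ((fun w' => (inl u, w')) '' H.neighborSet w)
      ((fun e => (inr e, w)) '' E) := by
    rw [Set.disjoint_left]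
    rintro _ ⟨w', -, rfl⟩ ⟨e, -, he⟩
    simp at he
  calc deg H w + E.ncard
      = ((fun w' => (inl u, w')) '' H.neighborSet w ∪ (fun e => (inr e, w)) '' E).ncard := by
        rw [Set.ncard_union_eq hdisj, Set.ncard_image_of_injective _ hinl,
          Set.ncard_image_of_injective _ hinr, deg]
    _ ≤ maxDeg (FSum F G H) := by
      refine ncard_le_maxDeg (v := (inl u, w)) ?_
      rintro _ (⟨w', hw', rfl⟩ | ⟨e, he, rfl⟩)
      · exact .inl ⟨rfl, ⟨u, rfl⟩, hw'⟩
      · exact .inr ⟨rfl, hE e he⟩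

variable (c : H.Coloring Bool) (hH : IsMBE H D fH pg)
  (hL : IsColumnLayout (FGraph F G) D k M t page σ)
include hH hL

theorem IsColumnLayout.fsumPage_lt :
    ∀ p q, (FSum F G H).Adj p q → fsumPage pg page σ s(p, q) < k := by
  rintro ⟨x, w⟩ ⟨y, w'⟩ h
  rcases fsum_adj_mk.mp h with ⟨rfl, ⟨u, rfl⟩, hH'⟩ | ⟨rfl, hK⟩
  · rw [fsumPage_mk_self]
    exact hL.relabel_lt _ _ (hH.2.1 _ _ hH')
  · rw [fsumPage_mk_of_ne hK.ne]
    exact hL.isMBE.2.1 _ _ hK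

theorem IsColumnLayout.fsum_not_crossing :
    ∀ p q p' q', (FSum F G H).Adj p q → (FSum F G H).Adj p' q' →
    fsumPage pg page σ s(p, q) = fsumPage pg page σ s(p', q') →
    ¬(blockPos fH c M t p < blockPos fH c M t p' ∧ blockPos fH c M t p' < blockPos fH c M t q ∧
      blockPos fH c M t q < blockPos fH c M t q') := by
  rintro ⟨x, w₁⟩ ⟨y, w₂⟩ ⟨x', w₃⟩ ⟨y', w₄⟩ h h' hp
  rcases fsum_adj_mk.mp h with ⟨rfl, ⟨u, rfl⟩, hH₁⟩ | ⟨rfl, hK₁⟩ <;>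
    rcases fsum_adj_mk.mp h' with ⟨rfl, ⟨u', rfl⟩, hH₂⟩ | ⟨rfl, hK₂⟩
  · rw [fsumPage_mk_self, fsumPage_mk_self] at hp
    exact not_crossing_vertical hH c hL.le_bound hH₁ hH₂
      (hL.relabel_inj _ _ _ _ (hH.2.1 _ _ hH₁) (hH.2.1 _ _ hH₂) hp)
  · rw [fsumPage_mk_self, fsumPage_mk_of_ne hK₂.ne] at hp
    exact not_crossing_of_adjacent_right (blockPos_adjacent hL.le_bound
      (hL.adjacent_of_relabel_eq_page _ _ _ _ (hH.2.1 _ _ hH₁) hK₂ hp))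
  · rw [fsumPage_mk_of_ne hK₁.ne, fsumPage_mk_self] at hp
    exact not_crossing_of_adjacent_left (blockPos_adjacent hL.le_bound
      (hL.adjacent_of_relabel_eq_page _ _ _ _ (hH.2.1 _ _ hH₂) hK₁ hp.symm))
  · rw [fsumPage_mk_of_ne hK₁.ne, fsumPage_mk_of_ne hK₂.ne] at hp
    exact not_crossing_horizontal hH.1 hL.isMBE hL.le_bound hK₁ hK₂ hp

theorem IsColumnLayout.fsum_matching :
    ∀ p q q', (FSum F G H).Adj p q → (FSum F G H).Adj p q' →
    q ≠ q' → fsumPage pg page σ s(p, q) ≠ fsumPage pg page σ s(p, q') := by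
  rintro ⟨x, w⟩ ⟨y, w₁⟩ ⟨z, w₂⟩ h h' hne
  rcases fsum_adj_mk.mp h with ⟨rfl, ⟨u, rfl⟩, hH₁⟩ | ⟨rfl, hK₁⟩
  · rcases fsum_adj_mk.mp h' with ⟨rfl, -, hH₂⟩ | ⟨rfl, hK₂⟩
    · rw [fsumPage_mk_self, fsumPage_mk_self]
      refine fun hp => hH.2.2.2 w w₁ w₂ hH₁ hH₂ (by rintro rfl; exact hne rfl) ?_
      exact hL.relabel_inj _ _ _ _ (hH.2.1 _ _ hH₁) (hH.2.1 _ _ hH₂) hp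
    · rw [fsumPage_mk_self, fsumPage_mk_of_ne hK₂.ne]
      exact hL.relabel_ne_page _ _ _ (hH.2.1 _ _ hH₁) hK₂
  · rcases fsum_adj_mk.mp h' with ⟨rfl, ⟨u, rfl⟩, hH₂⟩ | ⟨rfl, hK₂⟩
    · rw [fsumPage_mk_of_ne hK₁.ne, fsumPage_mk_self]
      exact (hL.relabel_ne_page _ _ _ (hH.2.1 _ _ hH₂) hK₁).symm
    · rw [fsumPage_mk_of_ne hK₁.ne, fsumPage_mk_of_ne hK₂.ne]
      exact hL.isMBE.2.2.2 _ y z hK₁ hK₂ (by rintro rfl; exact hne rfl)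

theorem IsColumnLayout.isMBE_fsum :
    IsMBE (FSum F G H) k (blockPos fH c M t) (fsumPage pg page σ) :=
  ⟨blockPos_injective hH.1 hL.isMBE.1 hL.le_bound, hL.fsumPage_lt hH, hL.fsum_not_crossing c hH,
    hL.fsum_matching hH⟩

end FSumEmbedding

section FGraphQ
variable {V : Type*} {G : SimpleGraph V}

@[simp]
theorem fgraphQ_adj_inl_inl {u v : V} : ¬(FGraph .Q G).Adj (inl u) (inl v) := by
  simp [FGraph, derivedG, FOp.black]

theorem fgraphQ_adj_inl_inr {u : V} {e : G.edgeSet} :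
    (FGraph .Q G).Adj (inl u) (inr e) ↔ u ∈ (e : Sym2 V) := Iff.rfl

theorem fgraphQ_adj_inr_inl {u : V} {e : G.edgeSet} :
    (FGraph .Q G).Adj (inr e) (inl u) ↔ u ∈ (e : Sym2 V) := Iff.rfl

theorem fgraphQ_adj_inr_inr {e f : G.edgeSet} :
    (FGraph .Q G).Adj (inr e) (inr f) ↔
      e ≠ f ∧ ∃ u, u ∈ (e : Sym2 V) ∧ u ∈ (f : Sym2 V) := by
  simp [FGraph, derivedG, FOp.white]

end FGraphQ

namespace pathG

variable {n D : ℕ}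

def edge (j : Fin (n - 1)) : (pathG n).edgeSet :=
  ⟨s(⟨j, by omega⟩, ⟨j + 1, by omega⟩), Or.inl rfl⟩

theorem edge_injective : Function.Injective (edge (n := n)) := by
  intro j j' h
  have := congrArg (fun e : (pathG n).edgeSet => (e : Sym2 (Fin n))) h
  simp [edge, Fin.ext_iff] at this
  omega

theorem edge_surjective : Function.Surjective (edge (n := n)) := by
  rintro ⟨e, he⟩
  induction e using Sym2.inductionOn with
  | hf a b =>
    have hab : (a : ℕ) + 1 = b ∨ (b : ℕ) + 1 = a := he
    rcases hab with h | h
    · exact ⟨⟨a, by omega⟩, Subtype.ext (by simp [edge, Fin.ext_iff]; omega)⟩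
    · exact ⟨⟨b, by omega⟩, Subtype.ext (by simp [edge, Fin.ext_iff]; omega)⟩

noncomputable def edgeEquiv : Fin (n - 1) ≃ (pathG n).edgeSet :=
  .ofBijective edge ⟨edge_injective, edge_surjective⟩

@[simp]
theorem mem_edgeEquiv {i : Fin n} {j : Fin (n - 1)} :
    i ∈ (edgeEquiv j : Sym2 (Fin n)) ↔ (i : ℕ) = j ∨ (i : ℕ) = j + 1 := by
  change i ∈ (edge j : Sym2 (Fin n)) ↔ _
  simp [edge, Fin.ext_iff]

@[simp]
theorem fgraphQ_adj_edgeEquiv {j j' : Fin (n - 1)} :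
    (FGraph .Q (pathG n)).Adj (inr (edgeEquiv j)) (inr (edgeEquiv j')) ↔
      (j : ℕ) + 1 = j' ∨ (j' : ℕ) + 1 = j := by
  simp only [fgraphQ_adj_inr_inr, ne_eq, EmbeddingLike.apply_eq_iff_eq, mem_edgeEquiv]
  constructor
  · rintro ⟨hne, u, hu, hu'⟩
    have := Fin.val_ne_of_ne hne
    omega
  · intro h
    refine ⟨fun hjj => by subst hjj; omega, ?_⟩
    rcases h with h | h
    · exact ⟨⟨j', by omega⟩, by simp; omega⟩
    · exact ⟨⟨j, by omega⟩, by simp; omega⟩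

theorem vertex_cases (x : Fin n ⊕ (pathG n).edgeSet) :
    (∃ i, x = inl i) ∨ ∃ j, x = inr (edgeEquiv j) := by
  rcases x with i | e
  · exact .inl ⟨i, rfl⟩
  · exact .inr ((edgeEquiv.surjective e).imp fun j hj => by rw [hj])

@[simp]
theorem fgraphQ_adj_inl_edgeEquiv {i : Fin n} {j : Fin (n - 1)} :
    (FGraph .Q (pathG n)).Adj (inl i) (inr (edgeEquiv j)) ↔ (i : ℕ) = j ∨ (i : ℕ) = j + 1 :=
  fgraphQ_adj_inl_inr.trans mem_edgeEquiv

@[simp]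
theorem fgraphQ_adj_edgeEquiv_inl {i : Fin n} {j : Fin (n - 1)} :
    (FGraph .Q (pathG n)).Adj (inr (edgeEquiv j)) (inl i) ↔ (i : ℕ) = j ∨ (i : ℕ) = j + 1 :=
  fgraphQ_adj_inr_inl.trans mem_edgeEquiv

/-- A copy of `Q(P_n)` is laid out as `v_{n-1}, …, v_0, e_0, …, e_{n-2}`. The edges `v_j e_j`
and the edges `v_{j+1} e_j` form two nested families (pages `D` and `D + 1`), and the path
`e_0 e_1 …` joins consecutive positions, alternating between page `0` and a page other than
`D` and `D + 1`. -/
noncomputable def qPos (n : ℕ) : Fin n ⊕ (pathG n).edgeSet → ℕ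
  | inl i => n - 1 - i
  | inr e => n + edgeEquiv.symm e

noncomputable def qPageAux (D : ℕ) :
    Fin n ⊕ (pathG n).edgeSet → Fin n ⊕ (pathG n).edgeSet → ℕ
  | inl i, inr e | inr e, inl i => if (i : ℕ) = edgeEquiv.symm e then D else D + 1
  | inr e, inr f =>
    if min (edgeEquiv.symm e : ℕ) (edgeEquiv.symm f) % 2 = 0 then 0 else if 2 ≤ D then 1 else 3
  | inl _, inl _ => 0

noncomputable def qPage (D : ℕ) : Sym2 (Fin n ⊕ (pathG n).edgeSet) → ℕ :=
  Sym2.lift ⟨qPageAux D, by rintro (i | e) (j | f) <;> simp [qPageAux, min_comm]⟩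

theorem isMBE_q (hD : 1 ≤ D) (hn : 3 ≤ n) :
    IsMBE (FGraph .Q (pathG n)) (max (D + 2) (min n 4)) (qPos n) (qPage D) := by
  refine ⟨?_, ?_, ?_, ?_⟩
  · intro x y h
    rcases vertex_cases x with ⟨i₁, rfl⟩ | ⟨j₁, rfl⟩ <;>
      rcases vertex_cases y with ⟨i₂, rfl⟩ | ⟨j₂, rfl⟩ <;>
      simp [qPos, Fin.ext_iff] at h ⊢ <;> omega
  · intro x y h
    rcases vertex_cases x with ⟨i₁, rfl⟩ | ⟨j₁, rfl⟩ <;>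
      rcases vertex_cases y with ⟨i₂, rfl⟩ | ⟨j₂, rfl⟩ <;>
      simp [qPage, qPageAux] at h ⊢ <;> grind
  · intro x y x' y' h h' hp
    rcases vertex_cases x with ⟨i₁, rfl⟩ | ⟨j₁, rfl⟩ <;>
      rcases vertex_cases y with ⟨i₂, rfl⟩ | ⟨j₂, rfl⟩ <;>
      rcases vertex_cases x' with ⟨i₃, rfl⟩ | ⟨j₃, rfl⟩ <;>
      rcases vertex_cases y' with ⟨i₄, rfl⟩ | ⟨j₄, rfl⟩ <;>
      simp [qPage, qPageAux, qPos] at h h' hp ⊢ <;> grind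
  · intro x y z h h' hne
    rcases vertex_cases x with ⟨i₁, rfl⟩ | ⟨j₁, rfl⟩ <;>
      rcases vertex_cases y with ⟨i₂, rfl⟩ | ⟨j₂, rfl⟩ <;>
      rcases vertex_cases z with ⟨i₃, rfl⟩ | ⟨j₃, rfl⟩ <;>
      simp [qPage, qPageAux, Fin.ext_iff] at h h' hne ⊢ <;> grind

theorem isColumnLayout_q (hD : 1 ≤ D) (hn : 3 ≤ n) :
    IsColumnLayout (FGraph .Q (pathG n)) D (max (D + 2) (min n 4)) (2 * n - 2) (qPos n)
      (qPage D) fun _ p => p where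
  isMBE := isMBE_q hD hn
  le_bound x := by
    rcases vertex_cases x with ⟨i, rfl⟩ | ⟨j, rfl⟩ <;> simp [qPos] <;> omega
  relabel_lt _ _ _ := by omega
  relabel_inj _ _ _ _ _ _ h := h
  relabel_ne_page u y p hp h := by
    rcases vertex_cases y with ⟨i, rfl⟩ | ⟨j, rfl⟩
    · simp at h
    · simp only [qPage, Sym2.lift_mk, qPageAux]
      split_ifs <;> omega
  adjacent_of_relabel_eq_page u p x y hp h := by
    rcases vertex_cases x with ⟨i₁, rfl⟩ | ⟨j₁, rfl⟩ <;>
      rcases vertex_cases y with ⟨i₂, rfl⟩ | ⟨j₂, rfl⟩ <;>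
      simp [qPage, qPageAux, qPos] at h ⊢ <;> grind

/-- For `n = 2` the copy is laid out as `v_0, e, v_1`. The edge `v_1 e` takes page `0`, so in the
column of `v_1` the page `0` of `H` is moved to the spare page `D`. -/
def qPosTwo : Fin 2 ⊕ (pathG 2).edgeSet → ℕ
  | inl i => 2 * i
  | inr _ => 1

def qPageTwo (D : ℕ) (z : Sym2 (Fin 2 ⊕ (pathG 2).edgeSet)) : ℕ :=
  if inl 0 ∈ z then D else 0

def qRelabelTwo (D : ℕ) (x : Fin 2 ⊕ (pathG 2).edgeSet) (p : ℕ) : ℕ :=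
  if x = inl 1 ∧ p = 0 then D else p

@[simp]
theorem not_fgraphQ_two_adj_inr_inr (e f : (pathG 2).edgeSet) :
    ¬(FGraph .Q (pathG 2)).Adj (inr e) (inr f) := by
  obtain ⟨j, rfl⟩ := edgeEquiv.surjective e
  obtain ⟨j', rfl⟩ := edgeEquiv.surjective f
  rw [fgraphQ_adj_edgeEquiv]
  omega

theorem qPosTwo_adjacent {x y : Fin 2 ⊕ (pathG 2).edgeSet} (h : (FGraph .Q (pathG 2)).Adj x y) :
    qPosTwo y = qPosTwo x + 1 ∨ qPosTwo x = qPosTwo y + 1 := by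
  rcases vertex_cases x with ⟨i₁, rfl⟩ | ⟨j₁, rfl⟩ <;>
    rcases vertex_cases y with ⟨i₂, rfl⟩ | ⟨j₂, rfl⟩ <;>
    simp [qPosTwo] at h ⊢ <;> omega

theorem isMBE_q_two (hD : 1 ≤ D) : IsMBE (FGraph .Q (pathG 2)) (D + 1) qPosTwo (qPageTwo D) := by
  refine ⟨?_, ?_, fun x y x' y' h _ _ => not_crossing_of_adjacent_left (qPosTwo_adjacent h), ?_⟩
  · intro x y h
    rcases vertex_cases x with ⟨i₁, rfl⟩ | ⟨j₁, rfl⟩ <;>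
      rcases vertex_cases y with ⟨i₂, rfl⟩ | ⟨j₂, rfl⟩ <;>
      simp [qPosTwo, Fin.ext_iff] at h ⊢ <;> omega
  · intro x y h
    rcases vertex_cases x with ⟨i₁, rfl⟩ | ⟨j₁, rfl⟩ <;>
      rcases vertex_cases y with ⟨i₂, rfl⟩ | ⟨j₂, rfl⟩ <;>
      simp [qPageTwo] at h ⊢ <;> grind
  · intro x y z h h' hne
    rcases vertex_cases x with ⟨i₁, rfl⟩ | ⟨j₁, rfl⟩ <;>
      rcases vertex_cases y with ⟨i₂, rfl⟩ | ⟨j₂, rfl⟩ <;>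
      rcases vertex_cases z with ⟨i₃, rfl⟩ | ⟨j₃, rfl⟩ <;>
      simp [qPageTwo, Fin.ext_iff] at h h' hne ⊢
    split_ifs <;> omega

theorem isColumnLayout_q_two (hD : 1 ≤ D) :
    IsColumnLayout (FGraph .Q (pathG 2)) D (D + 1) 2 qPosTwo (qPageTwo D) (qRelabelTwo D) where
  isMBE := isMBE_q_two hD
  le_bound x := by
    rcases vertex_cases x with ⟨i, rfl⟩ | ⟨j, rfl⟩
    · simp only [qPosTwo]
      omega
    · simp [qPosTwo]
  relabel_lt u p hp := by simp only [qRelabelTwo]; split_ifs <;> omega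
  relabel_inj u v p q hp hq h := by simp only [qRelabelTwo] at h; split_ifs at h <;> omega
  relabel_ne_page u y p hp h := by
    rcases vertex_cases y with ⟨i, rfl⟩ | ⟨j, rfl⟩
    · simp at h
    · simp only [qPageTwo, qRelabelTwo, Sym2.mem_iff, inl.injEq, reduceCtorEq, or_false]
      split_ifs <;> grind
  adjacent_of_relabel_eq_page _ _ _ _ _ h _ := qPosTwo_adjacent h

section LowerBounds

variable {W : Type*} [Fintype W] {H : SimpleGraph W}

theorem deg_add_one_le_maxDeg_fsum (hn : 2 ≤ n) (w : W) :
    deg H w + 1 ≤ maxDeg (FSum .Q (pathG n) H) := by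
  simpa using deg_add_ncard_le_maxDeg_fsum (F := .Q) (G := pathG n) (H := H) ⟨0, by omega⟩ w
    (E := {edgeEquiv ⟨0, by omega⟩}) (by simp)

theorem deg_add_two_le_maxDeg_fsum (hn : 3 ≤ n) (w : W) :
    deg H w + 2 ≤ maxDeg (FSum .Q (pathG n) H) := by
  have hne : edgeEquiv (n := n) ⟨0, by omega⟩ ≠ edgeEquiv ⟨1, by omega⟩ := by simp
  simpa [Set.ncard_pair hne] using deg_add_ncard_le_maxDeg_fsum (F := .Q) (G := pathG n) (H := H)
    ⟨1, by omega⟩ w (E := {edgeEquiv ⟨0, by omega⟩, edgeEquiv ⟨1, by omega⟩}) (by simp)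

theorem four_le_maxDeg_fsum (hn : 4 ≤ n) (w : W) : 4 ≤ maxDeg (FSum .Q (pathG n) H) := by
  let e (j : ℕ) (h : j < n - 1) : Fin n ⊕ (pathG n).edgeSet := inr (edgeEquiv ⟨j, h⟩)
  let v (i : ℕ) (h : i < n) : Fin n ⊕ (pathG n).edgeSet := inl ⟨i, h⟩
  have hcard : ({(v 1 (by omega), w), (v 2 (by omega), w), (e 0 (by omega), w),
      (e 2 (by omega), w)} : Set _).ncard = 4 := by
    rw [Set.ncard_insert_of_notMem, Set.ncard_insert_of_notMem, Set.ncard_pair] <;>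
      simp [e, v, Fin.ext_iff]
  refine hcard.ge.trans (ncard_le_maxDeg (v := (e 1 (by omega), w)) ?_)
  intro p hp
  simp only [Set.mem_insert_iff, Set.mem_singleton_iff] at hp
  rcases hp with rfl | rfl | rfl | rfl <;> simp [fsum_adj_mk, e, v]

end LowerBounds

end pathG

theorem path_QSum_dispersable_general (n : ℕ) (hn : 2 ≤ n) {W : Type*} [Fintype W]
    (H : SimpleGraph W)
    (hbip : H.Colorable 2) (hdisp : mbt H = maxDeg H) (hΔ : 1 ≤ maxDeg H) :
    mbt (FSum .Q (pathG n) H) = maxDeg (FSum .Q (pathG n) H) := by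
  obtain ⟨fH, pg, hH⟩ := exists_isMBE_mbt H
  rw [hdisp] at hH
  have c : H.Coloring Bool := hbip.toColoring (by simp)
  obtain ⟨w, hw⟩ := exists_deg_eq_maxDeg hΔ
  rcases hn.eq_or_lt with rfl | hn
  · refine mbt_eq_maxDeg_of_isMBE ((pathG.isColumnLayout_q_two hΔ).isMBE_fsum c hH) ?_
    simpa [hw] using pathG.deg_add_one_le_maxDeg_fsum le_rfl w (H := H)
  · refine mbt_eq_maxDeg_of_isMBE ((pathG.isColumnLayout_q hΔ hn).isMBE_fsum c hH) ?_
    have hΔ₂ := pathG.deg_add_two_le_maxDeg_fsum hn w (H := H)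
    rw [hw] at hΔ₂
    refine max_le hΔ₂ ?_
    rcases Nat.lt_or_ge n 4 with h4 | h4
    · omega
    · exact (min_le_right n 4).trans (pathG.four_le_maxDeg_fsum h4 w)

/-- For `n ≥ 2` and any finite dispersable bipartite graph `H` with at
least one edge, `P_n +_Q H` is dispersable. -/
theorem path_QSum_dispersable (n : ℕ) (hn : 2 ≤ n) {W : Type*} [Fintype W]
    (H : SimpleGraph W) (hHE : H.edgeSet.Nonempty)
    (hbip : H.Colorable 2) (hdisp : mbt H = maxDeg H) (hΔ : 1 ≤ maxDeg H) :
    mbt (FSum .Q (pathG n) H) = maxDeg (FSum .Q (pathG n) H) :=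
  path_QSum_dispersable_general n hn H hbip hdisp hΔ
end
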